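/- Let p, b, q ∈ ℂ. For j ≥ 1 set β_j = −j((j+1)/2 · b + (j−1)/2 · p + q) and γ_j = j! (q−p) ((−p−b)/2)^{j−1}, and set γ₀ = 1. Then for every n ≥ 1 and every ℓ ∈ {0, 1, …, n−1}: ∑_{j=n−ℓ}^{n} [(−1)^j γ_j / (n−j)!] · ∏_{i=j+1}^{n} β_i = [n (−1)^{n−ℓ} / (ℓ! (n−ℓ))] · γ_{n−ℓ} · ∏_{i=n−ℓ}^{n−1} β_i. -/

import Mathlib

open Finset

/-- `β_j = −j((j+1)/2 · b + (j−1)/2 · p + q)`. -/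
noncomputable def β (p b q : ℂ) (j : ℕ) : ℂ :=
  -(j : ℂ) * (((j : ℂ) + 1) / 2 * b + ((j : ℂ) - 1) / 2 * p + q)

/-- `γ_j = j! (q−p) ((−p−b)/2)^{j−1}` for `j ≥ 1`, with `γ₀ = 1`. -/
noncomputable def γ (p b q : ℂ) (j : ℕ) : ℂ :=
  if j = 0 then 1 else (Nat.factorial j : ℂ) * (q - p) * ((-p - b) / 2) ^ (j - 1)

/-!
Downward induction on the lower summation index `m = n - ℓ`. Splitting off the term `j = m`
and using `γ_{m+1} = (m+1) · (-p-b)/2 · γ_m`, the induction step reduces to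
`m β_n - n β_m = m n (n - m) (-p-b)/2`, which holds because `β_j / j` is affine in `j`.
-/

section
open Nat
variable (p b q : ℂ)

lemma γ_succ {m : ℕ} (hm : m ≠ 0) :
    γ p b q (m + 1) = (m + 1) * ((-p - b) / 2) * γ p b q m := by
  obtain ⟨k, rfl⟩ := Nat.exists_eq_add_one_of_ne_zero hm
  simp only [γ, Nat.add_one_ne_zero, if_false, Nat.factorial_succ, Nat.add_sub_cancel,
    pow_succ, Nat.cast_mul, Nat.cast_add_one]
  ring

lemma natCast_mul_β_sub_natCast_mul_β (m n : ℕ) :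
    m * β p b q n - n * β p b q m = m * n * (n - m) * ((-p - b) / 2) := by
  simp only [β]
  ring

lemma sum_Icc_γ_mul_prod_β {m n : ℕ} (hm : 1 ≤ m) (hmn : m ≤ n) :
    ∑ j ∈ Icc m n, ((-1 : ℂ) ^ j * γ p b q j / (n - j)!) * ∏ i ∈ Icc (j + 1) n, β p b q i
      = n * (-1) ^ m / ((n - m)! * m) * γ p b q m * ∏ i ∈ Icc m (n - 1), β p b q i := by
  induction hmn using Nat.decreasingInduction with
  | self =>
    have hn : (n : ℂ) ≠ 0 := by exact_mod_cast (show n ≠ 0 by omega)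
    rw [Icc_self, sum_singleton, Icc_eq_empty (by omega), Icc_eq_empty (by omega)]
    field_simp
  | of_succ m hmn ih =>
    obtain ⟨k, hk⟩ : ∃ k, n - m = k + 1 := ⟨n - m - 1, by omega⟩
    have hP : ∏ i ∈ Icc (m + 1) n, β p b q i
        = (∏ i ∈ Icc (m + 1) (n - 1), β p b q i) * β p b q n := by
      obtain ⟨N, rfl⟩ : ∃ N, n = N + 1 := ⟨n - 1, by omega⟩
      exact prod_Icc_succ_top (by omega) _
    rw [← insert_Icc_add_one_left_eq_Icc hmn.le, sum_insert (by simp), ih (by omega),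
      ← insert_Icc_add_one_left_eq_Icc (show m ≤ n - 1 by omega), prod_insert (by simp), hP,
      γ_succ p b q (by omega), show n - (m + 1) = k by omega, hk, Nat.factorial_succ]
    have hβ := natCast_mul_β_sub_natCast_mul_β p b q m n
    have hnm : (n : ℂ) - m = k + 1 := by exact_mod_cast (by omega : (n : ℤ) - m = k + 1)
    rw [hnm] at hβ
    have hm0 : (m : ℂ) ≠ 0 := by exact_mod_cast (show m ≠ 0 by omega)
    have hk0 : (k ! : ℂ) ≠ 0 := by exact_mod_cast k.factorial_ne_zero
    push_cast
    field_simp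
    linear_combination 2 * (-1) ^ m * γ p b q m * (∏ i ∈ Icc (m + 1) (n - 1), β p b q i) * hβ
end

/-- for every `n ≥ 1` and `ℓ ∈ {0,…,n−1}`,
`∑_{j=n−ℓ}^{n} (−1)^j γ_j/(n−j)! ∏_{i=j+1}^{n} β_i
  = n(−1)^{n−ℓ}/(ℓ!(n−ℓ)) γ_{n−ℓ} ∏_{i=n−ℓ}^{n−1} β_i`. -/
theorem gamma_beta_sum (p b q : ℂ) (n ℓ : ℕ) (hn : 1 ≤ n) (hℓ : ℓ ≤ n - 1) :
    ∑ j ∈ Finset.Icc (n - ℓ) n,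
        ((-1 : ℂ) ^ j * γ p b q j / (Nat.factorial (n - j) : ℂ)) *
          ∏ i ∈ Finset.Icc (j + 1) n, β p b q i
      = ((n : ℂ) * (-1 : ℂ) ^ (n - ℓ) / ((Nat.factorial ℓ : ℂ) * ((n : ℂ) - (ℓ : ℂ)))) *
          γ p b q (n - ℓ) * ∏ i ∈ Finset.Icc (n - ℓ) (n - 1), β p b q i := by
  rw [sum_Icc_γ_mul_prod_β p b q (by omega) (Nat.sub_le n ℓ), Nat.sub_sub_self (by omega),
    Nat.cast_sub (by omega)]
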